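/- Let p be a prime, k a field of characteristic p, and b an integer with 1 ≤ b ≤ p. Define the k-linear operator D : k[x] → k[x] by D(g) = x²·g' + b·x·g. Then: (i) the ideal I = (x^{p+1−b}) of k[x] is D-invariant; (ii) there exists a k-linear map σ : I → I with D∘σ − σ∘D = id_I (so I is null-homotopic as a p-complex and the quotient map k[x] → k[x]/(x^{p+1−b}) is a quasi-isomorphism); (iii) on the (p+1−b)-dimensional quotient k[x]/(x^{p+1−b}) the induced operator D̄ satisfies D̄^{p+1−b} = 0 while D̄^{p−b}(1) ≠ 0. -/
import Mathlib


open Polynomial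

/-- The twisted differential `D(g) = x²·g' + b·x·g` on `k[x]`. -/
noncomputable def stmt8D (k : Type*) [Field k] (b : ℕ) :
    Polynomial k →ₗ[k] Polynomial k :=
  LinearMap.mulLeft k ((X : Polynomial k) ^ 2) ∘ₗ Polynomial.derivative
    + LinearMap.mulLeft k (Polynomial.C (b : k) * X)

/-- The ideal `I = (x^(p+1−b))` of `k[x]`. -/
noncomputable def stmt8I (k : Type*) [Field k] (p b : ℕ) : Ideal (Polynomial k) :=
  Ideal.span {(X : Polynomial k) ^ (p + 1 - b)}

lemma D_apply (k : Type*) [Field k] (b : ℕ) (f : Polynomial k) :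
    stmt8D k b f = X ^ 2 * derivative f + C (b : k) * X * f := rfl

lemma D_Xpow (k : Type*) [Field k] (b n : ℕ) :
    stmt8D k b (X ^ n) = ((n + b : ℕ) : k) • X ^ (n + 1) := by
  rw [D_apply, derivative_X_pow, smul_eq_C_mul]
  cases n with
  | zero => simp
  | succ m =>
    push_cast
    ring_nf
    rw [← mul_add, ← C_add]

noncomputable def sig (k : Type*) [Field k] (p b : ℕ) : Polynomial k →ₗ[k] Polynomial k :=
  (Polynomial.basisMonomials k).constr k
    (fun n => if p ∣ (n + b - 1) then 0 else -X ^ (n - 1))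

lemma sig_Xpow (k : Type*) [Field k] (p b n : ℕ) :
    sig k p b (X ^ n) = if p ∣ (n + b - 1) then 0 else -X ^ (n - 1) := by
  have h := Module.Basis.constr_basis (Polynomial.basisMonomials k) k
    (fun n => if p ∣ (n + b - 1) then (0 : Polynomial k) else -X ^ (n - 1)) n
  simp only [coe_basisMonomials] at h
  rw [sig, X_pow_eq_monomial]
  exact h

lemma mem_I (k : Type*) [Field k] (p b n : ℕ) (h : p + 1 - b ≤ n) :
    (X : Polynomial k) ^ n ∈ stmt8I k p b :=
  Ideal.mem_span_singleton.2 (pow_dvd_pow _ h)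

lemma notMem_I (k : Type*) [Field k] (p b n : ℕ) (h : n < p + 1 - b) :
    (X : Polynomial k) ^ n ∉ stmt8I k p b := by
  intro hm
  have hd := Ideal.mem_span_singleton.1 hm
  rw [X_pow_dvd_iff] at hd
  have := hd n h
  simp at this

lemma I_induction (k : Type*) [Field k] (p b : ℕ) {P : Polynomial k → Prop}
    (h0 : P 0) (hadd : ∀ f g, P f → P g → P (f + g))
    (hmono : ∀ (c : k) (n : ℕ), p + 1 - b ≤ n → P (c • X ^ n)) :
    ∀ g ∈ stmt8I k p b, P g := by
  intro g hg
  obtain ⟨q, hq⟩ := Ideal.mem_span_singleton.1 hg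
  subst hq
  clear hg
  induction q using Polynomial.induction_on' with
  | add f g hf hg => rw [mul_add]; exact hadd _ _ hf hg
  | monomial n c =>
    have : (X : Polynomial k) ^ (p + 1 - b) * monomial n c = c • X ^ (p + 1 - b + n) := by
      rw [← smul_X_eq_monomial, pow_add]
      rw [mul_smul_comm]
    rw [this]
    exact hmono c _ (Nat.le_add_right _ _)

lemma homotopy_key (p : ℕ) (hp : p.Prime) (k : Type*) [Field k] [CharP k p]
    (b n : ℕ) (hb1 : 1 ≤ b) (hn : 1 ≤ n) :
    stmt8D k b (sig k p b (X ^ n)) - sig k p b (stmt8D k b (X ^ n)) = X ^ n := by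
  have e1 : n + 1 + b - 1 = n + b := by omega
  have e2 : n + 1 - 1 = n := by omega
  have e3 : n - 1 + 1 = n := by omega
  have e4 : n + b = (n + b - 1) + 1 := by omega
  have e5 : n - 1 + b = n + b - 1 := by omega
  rw [D_Xpow, map_smul, sig_Xpow, sig_Xpow, e1, e2]
  by_cases h1 : p ∣ n + b - 1
  · have h2 : ¬ p ∣ n + b := by
      intro h2
      have hd1 : p ∣ (n + b) - (n + b - 1) := Nat.dvd_sub h2 h1
      have : (n + b) - (n + b - 1) = 1 := by omega
      rw [this, Nat.dvd_one] at hd1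
      exact hp.ne_one hd1
    rw [if_pos h1, if_neg h2, map_zero, smul_neg, zero_sub, neg_neg]
    have hc : ((n + b : ℕ) : k) = 1 := by
      rw [e4]
      push_cast
      rw [(CharP.cast_eq_zero_iff k p _).2 h1]
      ring
    rw [hc, one_smul]
  · rw [if_neg h1]
    by_cases h2 : p ∣ n + b
    · rw [if_pos h2, smul_zero, sub_zero, map_neg, D_Xpow, e3, e5, ← neg_smul]
      have h0 : ((n + b : ℕ) : k) = 0 := (CharP.cast_eq_zero_iff k p _).2 h2
      rw [e4] at h0
      push_cast at h0
      have hc : -((n + b - 1 : ℕ) : k) = 1 := by linear_combination -h0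
      rw [hc, one_smul]
    · rw [if_neg h2, map_neg, D_Xpow, e3, e5, smul_neg, sub_neg_eq_add, ← neg_smul, ← add_smul]
      have hc : (-((n + b - 1 : ℕ) : k) + ((n + b : ℕ) : k)) = 1 := by
        rw [e4]
        push_cast
        ring
      rw [hc, one_smul]

noncomputable def Dbar (k : Type*) [Field k] (p b : ℕ)
    (hD : (stmt8I k p b).restrictScalars k ≤
      ((stmt8I k p b).restrictScalars k).comap (stmt8D k b)) :
    Module.End k (Polynomial k ⧸ stmt8I k p b) :=
  (Submodule.Quotient.restrictScalarsEquiv k (stmt8I k p b)).toLinearMap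
    ∘ₗ Submodule.mapQ _ _ (stmt8D k b) hD
    ∘ₗ (Submodule.Quotient.restrictScalarsEquiv k (stmt8I k p b)).symm.toLinearMap

lemma Dbar_mk (k : Type*) [Field k] (p b : ℕ)
    (hD : (stmt8I k p b).restrictScalars k ≤
      ((stmt8I k p b).restrictScalars k).comap (stmt8D k b)) (g : Polynomial k) :
    Dbar k p b hD (Ideal.Quotient.mk (stmt8I k p b) g)
      = Ideal.Quotient.mk (stmt8I k p b) (stmt8D k b g) := rfl

lemma mk_smul (k : Type*) [Field k] (p b : ℕ) (c : k) (f : Polynomial k) :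
    Ideal.Quotient.mk (stmt8I k p b) (c • f) = c • Ideal.Quotient.mk (stmt8I k p b) f := by
  rw [← Ideal.Quotient.mkₐ_eq_mk k (stmt8I k p b)]
  exact map_smul (Ideal.Quotient.mkₐ k (stmt8I k p b)) c f

lemma Dbar_pow_mk (k : Type*) [Field k] (p b : ℕ)
    (hD : (stmt8I k p b).restrictScalars k ≤
      ((stmt8I k p b).restrictScalars k).comap (stmt8D k b)) (j n : ℕ) :
    (Dbar k p b hD ^ j) (Ideal.Quotient.mk (stmt8I k p b) (X ^ n))
      = (∏ i ∈ Finset.range j, ((n + b + i : ℕ) : k)) •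
          Ideal.Quotient.mk (stmt8I k p b) (X ^ (n + j)) := by
  induction j generalizing n with
  | zero => simp
  | succ j ih =>
    have e : n + 1 + j = n + (j + 1) := by omega
    rw [pow_succ, Module.End.mul_apply, Dbar_mk, D_Xpow, mk_smul, map_smul, ih, smul_smul, e,
      Finset.prod_range_succ']
    congr 1
    rw [mul_comm]
    refine congrArg₂ (· * ·) ?_ (by norm_num)
    exact Finset.prod_congr rfl fun i _ => by congr 1; omega


/-- for a prime `p`, a field `k` of characteristic `p` and `1 ≤ b ≤ p`,
with `D(g) = x²g' + bxg` on `k[x]`: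
(i) the ideal `I = (x^(p+1−b))` is `D`-invariant;
(ii) there is a `k`-linear `σ` mapping `I` to `I` with `D∘σ − σ∘D = id` on `I`;
(iii) the quotient `k[x]/(x^(p+1−b))` is `(p+1−b)`-dimensional and the induced operator
`D̄` satisfies `D̄^(p+1−b) = 0` while `D̄^(p−b)(1) ≠ 0`. -/
theorem stmt_8 (p : ℕ) (hp : p.Prime) (k : Type*) [Field k] [CharP k p]
    (b : ℕ) (hb1 : 1 ≤ b) (hbp : b ≤ p) :
    (∀ g ∈ stmt8I k p b, stmt8D k b g ∈ stmt8I k p b) ∧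
    (∃ σ : Polynomial k →ₗ[k] Polynomial k,
      (∀ g ∈ stmt8I k p b, σ g ∈ stmt8I k p b) ∧
      (∀ g ∈ stmt8I k p b, stmt8D k b (σ g) - σ (stmt8D k b g) = g)) ∧
    (Module.finrank k (Polynomial k ⧸ stmt8I k p b) = p + 1 - b) ∧
    (∃ Dbar : Module.End k (Polynomial k ⧸ stmt8I k p b),
      (∀ g : Polynomial k,
        Dbar (Ideal.Quotient.mk (stmt8I k p b) g)
          = Ideal.Quotient.mk (stmt8I k p b) (stmt8D k b g)) ∧
      Dbar ^ (p + 1 - b) = 0 ∧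
      (Dbar ^ (p - b)) (Ideal.Quotient.mk (stmt8I k p b) 1) ≠ 0) := by
  have hsmul : ∀ (c : k) (g : Polynomial k), g ∈ stmt8I k p b → c • g ∈ stmt8I k p b := by
    intro c g hg
    rw [Polynomial.smul_eq_C_mul]
    exact Ideal.mul_mem_left _ _ hg
  have hDi : ∀ g ∈ stmt8I k p b, stmt8D k b g ∈ stmt8I k p b := by
    refine I_induction k p b (by simp) (fun f g hf hg => by rw [map_add]; exact add_mem hf hg) ?_
    intro c n hn
    rw [map_smul, D_Xpow]
    exact hsmul _ _ (hsmul _ _ (mem_I k p b _ (by omega)))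
  refine ⟨hDi, ?_, ?_, ?_⟩
  · refine ⟨sig k p b, ?_, ?_⟩
    · refine I_induction k p b (by simp) (fun f g hf hg => by rw [map_add]; exact add_mem hf hg) ?_
      intro c n hn
      rw [map_smul, sig_Xpow]
      by_cases h : p ∣ n + b - 1
      · rw [if_pos h, smul_zero]; exact zero_mem _
      · rw [if_neg h]
        have hn' : p + 1 - b ≤ n - 1 := by
          rcases Nat.lt_or_ge (p + 1 - b) n with h1 | h1
          · omega
          · exfalso; apply h
            have : n = p + 1 - b := by omega
            have : n + b - 1 = p := by omega
            rw [this]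
        exact hsmul _ _ (neg_mem (mem_I k p b _ hn'))
    · refine I_induction k p b (by simp) ?_ ?_
      · intro f g hf hg
        simp only [map_add]
        rw [add_sub_add_comm, hf, hg]
      · intro c n hn
        simp only [map_smul, ← smul_sub]
        rw [homotopy_key p hp k b n hb1 (by omega)]
  · have hne : (X : Polynomial k) ^ (p + 1 - b) ≠ 0 := pow_ne_zero _ X_ne_zero
    have h2 : Module.finrank k (AdjoinRoot ((X : Polynomial k) ^ (p + 1 - b))) = p + 1 - b := by
      rw [PowerBasis.finrank (AdjoinRoot.powerBasis hne)]
      simp [AdjoinRoot.powerBasis]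
    exact h2
  · have hD' : (stmt8I k p b).restrictScalars k ≤
        ((stmt8I k p b).restrictScalars k).comap (stmt8D k b) := by
      intro g hg
      exact hDi g hg
    refine ⟨Dbar k p b hD', fun g => Dbar_mk k p b hD' g, ?_, ?_⟩
    · apply LinearMap.ext
      intro x
      obtain ⟨g, rfl⟩ := Ideal.Quotient.mk_surjective x
      simp only [LinearMap.zero_apply]
      induction g using Polynomial.induction_on' with
      | add f g hf hg => rw [map_add, map_add, hf, hg, add_zero]
      | monomial n c =>
        rw [← smul_X_eq_monomial, mk_smul, map_smul, Dbar_pow_mk]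
        rw [Ideal.Quotient.eq_zero_iff_mem.2 (mem_I k p b _ (by omega))]
        simp
    · rw [show (1 : Polynomial k) = X ^ 0 from (pow_zero _).symm, Dbar_pow_mk]
      have hc : (∏ i ∈ Finset.range (p - b), ((0 + b + i : ℕ) : k)) ≠ 0 := by
        rw [Finset.prod_ne_zero_iff]
        intro i hi
        rw [Finset.mem_range] at hi
        rw [Ne, CharP.cast_eq_zero_iff k p]
        intro hdvd
        have := Nat.le_of_dvd (by omega) hdvd
        omega
      have hv : Ideal.Quotient.mk (stmt8I k p b) (X ^ (0 + (p - b))) ≠ 0 := by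
        rw [Ne, Ideal.Quotient.eq_zero_iff_mem]
        exact notMem_I k p b _ (by omega)
      intro h
      apply hv
      have h2 : (∏ i ∈ Finset.range (p - b), ((0 + b + i : ℕ) : k))⁻¹ •
          ((∏ i ∈ Finset.range (p - b), ((0 + b + i : ℕ) : k)) •
            Ideal.Quotient.mk (stmt8I k p b) (X ^ (0 + (p - b)))) = 0 := by
        rw [h, smul_zero]
      rwa [smul_smul, inv_mul_cancel₀ hc, one_smul] at h2
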